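/- arXiv:1905.04869 — 8 statements merged into one kernel-verified Lean document; each statement's English description precedes it below -/
import Mathlib

section
/- Let a, q, α, β, γ, δ, ε be complex numbers with a ∉ {0,1}, αβ ≠ 0, satisfying the Fuchsian relation 1 + α + β = γ + δ + ε. Suppose y is holomorphic on an open set U ⊆ ℂ \ {0, 1, a} and satisfies the general Heun equation y''(z) + (γ/z + δ/(z−1) + ε/(z−a)) y'(z) + ((αβz − q)/(z(z−1)(z−a))) y(z) = 0 on U. Then the function v := y' satisfies, at every z ∈ U with αβz − q ≠ 0, the equation v''(z) + ((γ+1)/z + (δ+1)/(z−1) + (ε+1)/(z−a) − αβ/(αβz−q)) v'(z) + (f(z)/(z(z−1)(z−a)(αβz−q))) v(z) = 0, where f(z) = z(αβz − 2q)(αβ + γ + δ + ε) + q² + q(γ + a(γ+δ) + ε) − αβγa. -/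
/-!
Differentiating `y'' + P y' + Q y = 0` gives `y''' + P y'' + (P' + Q) y' + Q' y = 0`. Where `Q ≠ 0`,
i.e. away from the zero `z = q / (αβ)` of `Q = (αβz - q) / (z(z-1)(z-a))`, the original equation
expresses `y` through `y'` and `y''`, and eliminating it leaves a second order equation for `y'`
with coefficients `P - Q'/Q` and `P' + Q - P Q'/Q`. Since
`Q'/Q = αβ/(αβz - q) - 1/z - 1/(z-1) - 1/(z-a)`, these are the stated coefficients, the second
one after using the Fuchsian relation to eliminate `ε`.
-/

open Filter Topology

theorem deriv_deriv_deriv_add_eq_zero_of_ode {U : Set ℂ} (hU : IsOpen U) {y P Q : ℂ → ℂ}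
    (hy : DifferentiableOn ℂ y U)
    (hode : ∀ z ∈ U, deriv (deriv y) z + P z * deriv y z + Q z * y z = 0)
    {z : ℂ} (hz : z ∈ U) (hP : DifferentiableAt ℂ P z) (hQ : DifferentiableAt ℂ Q z) :
    deriv (deriv (deriv y)) z + P z * deriv (deriv y) z + (deriv P z + Q z) * deriv y z
      + deriv Q z * y z = 0 := by
  have hyan : AnalyticAt ℂ y z := hy.analyticOnNhd hU z hz
  have hy₂ : DifferentiableAt ℂ (deriv (deriv y)) z := hyan.deriv.deriv.differentiableAt
  have hy₁ : DifferentiableAt ℂ (deriv y) z := hyan.deriv.differentiableAt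
  have hy₀ : DifferentiableAt ℂ y z := hyan.differentiableAt
  have hvanish : deriv (deriv y) + P * deriv y + Q * y =ᶠ[𝓝 z] 0 :=
    eventually_of_mem (hU.mem_nhds hz) hode
  have hderiv := ((hy₂.hasDerivAt.add (hP.hasDerivAt.mul hy₁.hasDerivAt)).add
    (hQ.hasDerivAt.mul hy₀.hasDerivAt)).deriv
  rw [hvanish.deriv_eq, deriv_zero, Pi.zero_apply] at hderiv
  linear_combination -hderiv

theorem deriv_solves_ode_of_ode {U : Set ℂ} (hU : IsOpen U) {y P Q : ℂ → ℂ}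
    (hy : DifferentiableOn ℂ y U)
    (hode : ∀ z ∈ U, deriv (deriv y) z + P z * deriv y z + Q z * y z = 0)
    {z : ℂ} (hz : z ∈ U) (hP : DifferentiableAt ℂ P z) (hQ : DifferentiableAt ℂ Q z)
    (hQz : Q z ≠ 0) :
    deriv (deriv (deriv y)) z + (P z - logDeriv Q z) * deriv (deriv y) z
      + (deriv P z + Q z - P z * logDeriv Q z) * deriv y z = 0 := by
  have h₃ := deriv_deriv_deriv_add_eq_zero_of_ode hU hy hode hz hP hQ
  rw [logDeriv_apply]
  field_simp
  linear_combination Q z * h₃ - deriv Q z * hode z hz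

theorem logDeriv_heun_zerothOrderCoeff (a q α β : ℂ) {z : ℂ} (hz0 : z ≠ 0) (hz1 : z - 1 ≠ 0)
    (hza : z - a ≠ 0) (hN : α * β * z - q ≠ 0) :
    logDeriv (fun w => (α * β * w - q) / (w * (w - 1) * (w - a))) z
      = α * β / (α * β * z - q) - (1 / z + 1 / (z - 1) + 1 / (z - a)) := by
  rw [logDeriv_div (f := fun w => α * β * w - q) _ hN (by simp [*]) (by fun_prop) (by fun_prop),
    logDeriv_mul (f := fun w => w * (w - 1)) _ (mul_ne_zero hz0 hz1) hza (by fun_prop)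
      (by fun_prop),
    logDeriv_mul (f := fun w => w) _ hz0 hz1 (by fun_prop) (by fun_prop)]
  simp [logDeriv_apply]

theorem hasDerivAt_heun_firstOrderCoeff (a γ δ ε : ℂ) {z : ℂ} (hz0 : z ≠ 0) (hz1 : z - 1 ≠ 0)
    (hza : z - a ≠ 0) :
    HasDerivAt (fun w => γ / w + δ / (w - 1) + ε / (w - a))
      (-γ / z ^ 2 - δ / (z - 1) ^ 2 - ε / (z - a) ^ 2) z := by
  have hpole : ∀ c b : ℂ, z - b ≠ 0 → HasDerivAt (fun w => c / (w - b)) (-c / (z - b) ^ 2) z :=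
    fun c b hb => by simpa using (hasDerivAt_const z c).fun_div ((hasDerivAt_id z).sub_const b) hb
  have h := ((hpole γ 0 (by simpa)).fun_add (hpole δ 1 hz1)).fun_add (hpole ε a hza)
  simp only [sub_zero] at h
  exact h.congr_deriv (by ring)

theorem heun_deriv_zerothOrderCoeff_eq (a q α β γ δ ε : ℂ) (hFuchs : 1 + α + β = γ + δ + ε)
    {z : ℂ} (hz0 : z ≠ 0) (hz1 : z - 1 ≠ 0) (hza : z - a ≠ 0) (hN : α * β * z - q ≠ 0) :
    (-γ / z ^ 2 - δ / (z - 1) ^ 2 - ε / (z - a) ^ 2) + (α * β * z - q) / (z * (z - 1) * (z - a))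
      - (γ / z + δ / (z - 1) + ε / (z - a))
        * (α * β / (α * β * z - q) - (1 / z + 1 / (z - 1) + 1 / (z - a)))
    = (z * (α * β * z - 2 * q) * (α * β + γ + δ + ε)
            + q ^ 2 + q * (γ + a * (γ + δ) + ε) - α * β * γ * a)
          / (z * (z - 1) * (z - a) * (α * β * z - q)) := by
  obtain rfl : ε = 1 + α + β - γ - δ := by linear_combination -hFuchs
  -- so that `field_simp` sees the atom `N` and can use `hN`
  generalize hNdef : α * β * z - q = N at *
  field_simp
  subst hNdef
  ring

theorem heun_deriv_equation_general
    (a q α β γ δ ε : ℂ)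
    (hFuchs : 1 + α + β = γ + δ + ε)
    (U : Set ℂ) (hU : IsOpen U) (hUsub : U ⊆ ({0, 1, a} : Set ℂ)ᶜ)
    (y : ℂ → ℂ) (hy : DifferentiableOn ℂ y U)
    (hode : ∀ z ∈ U, deriv (deriv y) z
      + (γ / z + δ / (z - 1) + ε / (z - a)) * deriv y z
      + ((α * β * z - q) / (z * (z - 1) * (z - a))) * y z = 0) :
    ∀ z ∈ U, α * β * z - q ≠ 0 →
      deriv (deriv (deriv y)) z
      + ((γ + 1) / z + (δ + 1) / (z - 1) + (ε + 1) / (z - a)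
          - α * β / (α * β * z - q)) * deriv (deriv y) z
      + ((z * (α * β * z - 2 * q) * (α * β + γ + δ + ε)
            + q ^ 2 + q * (γ + a * (γ + δ) + ε) - α * β * γ * a)
          / (z * (z - 1) * (z - a) * (α * β * z - q))) * deriv y z = 0 := by
  intro z hz hN
  obtain ⟨hz0, hz1, hza⟩ : z ≠ 0 ∧ z ≠ 1 ∧ z ≠ a := by simpa using hUsub hz
  replace hz1 := sub_ne_zero.2 hz1
  replace hza := sub_ne_zero.2 hza
  have hP := hasDerivAt_heun_firstOrderCoeff a γ δ ε hz0 hz1 hza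
  have hden : z * (z - 1) * (z - a) ≠ 0 := by simp [*]
  have h := deriv_solves_ode_of_ode hU hy hode hz hP.differentiableAt
    (DifferentiableAt.div (by fun_prop) (by fun_prop) hden) (div_ne_zero hN hden)
  rw [hP.deriv, logDeriv_heun_zerothOrderCoeff a q α β hz0 hz1 hza hN,
    heun_deriv_zerothOrderCoeff_eq a q α β γ δ ε hFuchs hz0 hz1 hza hN] at h
  convert h using 3
  ring

/-- The derivative of a solution of the general Heun equation satisfies a second order
Fuchsian equation with five regular singular points. -/
theorem heun_deriv_equation
    (a q α β γ δ ε : ℂ) (ha0 : a ≠ 0) (ha1 : a ≠ 1) (hαβ : α * β ≠ 0)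
    (hFuchs : 1 + α + β = γ + δ + ε)
    (U : Set ℂ) (hU : IsOpen U) (hUsub : U ⊆ ({0, 1, a} : Set ℂ)ᶜ)
    (y : ℂ → ℂ) (hy : DifferentiableOn ℂ y U)
    (hode : ∀ z ∈ U, deriv (deriv y) z
      + (γ / z + δ / (z - 1) + ε / (z - a)) * deriv y z
      + ((α * β * z - q) / (z * (z - 1) * (z - a))) * y z = 0) :
    ∀ z ∈ U, α * β * z - q ≠ 0 →
      deriv (deriv (deriv y)) z
      + ((γ + 1) / z + (δ + 1) / (z - 1) + (ε + 1) / (z - a)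
          - α * β / (α * β * z - q)) * deriv (deriv y) z
      + ((z * (α * β * z - 2 * q) * (α * β + γ + δ + ε)
            + q ^ 2 + q * (γ + a * (γ + δ) + ε) - α * β * γ * a)
          / (z * (z - 1) * (z - a) * (α * β * z - q))) * deriv y z = 0 :=
  heun_deriv_equation_general a q α β γ δ ε hFuchs U hU hUsub y hy hode
end

section
/- Let α, γ, δ, ε, q be complex numbers with α ≠ 0. Suppose y is holomorphic on an open set U ⊆ ℂ \ {0, 1} and satisfies the confluent Heun equation y''(z) + (γ/z + δ/(z−1) + ε) y'(z) + ((αz − q)/(z(z−1))) y(z) = 0 on U. Then the function v := y' satisfies, at every z ∈ U with αz − q ≠ 0, the equation v''(z) + ((γ+1)/z + (δ+1)/(z−1) + ε − α/(αz−q)) v'(z) + (g(z)/(z(z−1)(αz−q))) v(z) = 0, where g(z) = (α+ε)(αz − 2q)z + q² − (γ + δ − ε)q + αγ. -/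
/-!
Differentiating `y'' + A y' + B y = 0` gives `y''' + A y'' + (A' + B) y' + B' y = 0`, and wherever
`B ≠ 0` the original equation expresses `y` through `y'` and `y''`. Eliminating `y` leaves a
second order equation for `v = y'` with coefficients `A - B'/B` and `A' + B - A B'/B`. For the
confluent Heun equation `B'/B = α/(αz - q) - 1/z - 1/(z - 1)`; this shifts `γ, δ` by one and
creates the apparent singularity at `z = q/α`.
-/

open Filter Topology

section SecondOrderLinear

variable {U : Set ℂ} {y A B : ℂ → ℂ} {z A' B' : ℂ}

theorem deriv_secondOrderLinear_eq_zero (hU : IsOpen U) (hy : DifferentiableOn ℂ y U)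
    (hode : ∀ w ∈ U, deriv (deriv y) w + A w * deriv y w + B w * y w = 0)
    (hz : z ∈ U) (hA : HasDerivAt A A' z) (hB : HasDerivAt B B' z) :
    deriv (deriv (deriv y)) z + A z * deriv (deriv y) z + (A' + B z) * deriv y z
      + B' * y z = 0 := by
  have hyA := hy.analyticOnNhd hU
  have hderiv : HasDerivAt (fun w => deriv (deriv y) w + A w * deriv y w + B w * y w)
      (deriv (deriv (deriv y)) z + A z * deriv (deriv y) z + (A' + B z) * deriv y z
        + B' * y z) z := by
    have := ((hyA.deriv.deriv z hz).differentiableAt.hasDerivAt.add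
      (hA.mul (hyA.deriv z hz).differentiableAt.hasDerivAt)).add
      (hB.mul (hyA z hz).differentiableAt.hasDerivAt)
    exact this.congr_deriv (by ring)
  have hzero : HasDerivAt (fun w => deriv (deriv y) w + A w * deriv y w + B w * y w) 0 z :=
    (hasDerivAt_const z 0).congr_of_eventuallyEq
      (eventually_of_mem (hU.mem_nhds hz) hode)
  exact hderiv.unique hzero

theorem secondOrderLinear_deriv_equation (hU : IsOpen U) (hy : DifferentiableOn ℂ y U)
    (hode : ∀ w ∈ U, deriv (deriv y) w + A w * deriv y w + B w * y w = 0)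
    (hz : z ∈ U) (hA : HasDerivAt A A' z) (hB : HasDerivAt B B' z) (hBz : B z ≠ 0) :
    deriv (deriv (deriv y)) z + (A z - B' / B z) * deriv (deriv y) z
      + (A' + B z - A z * B' / B z) * deriv y z = 0 := by
  have horig := hode z hz
  have hdiff := deriv_secondOrderLinear_eq_zero hU hy hode hz hA hB
  field_simp
  linear_combination B z * hdiff - B' * horig

end SecondOrderLinear

theorem hasDerivAt_confluentHeun_firstCoeff (γ δ ε : ℂ) {z : ℂ} (hz0 : z ≠ 0) (hz1 : z - 1 ≠ 0) :
    HasDerivAt (fun w => γ / w + δ / (w - 1) + ε) (-(γ / z ^ 2) - δ / (z - 1) ^ 2) z := by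
  refine ((((hasDerivAt_const z γ).div (hasDerivAt_id z) hz0).add
    ((hasDerivAt_const z δ).div ((hasDerivAt_id z).sub_const 1) hz1)).add_const ε).congr_deriv ?_
  simp only [id_eq]
  ring

theorem hasDerivAt_confluentHeun_secondCoeff (α q : ℂ) {z : ℂ} (hz0 : z ≠ 0) (hz1 : z - 1 ≠ 0) :
    HasDerivAt (fun w => (α * w - q) / (w * (w - 1)))
      ((α * (z * (z - 1)) - (α * z - q) * (2 * z - 1)) / (z * (z - 1)) ^ 2) z := by
  refine ((((hasDerivAt_id z).const_mul α).sub_const q).div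
    ((hasDerivAt_id z).mul ((hasDerivAt_id z).sub_const 1)) (mul_ne_zero hz0 hz1)).congr_deriv ?_
  simp only [id_eq, Pi.mul_apply]
  ring

theorem confluentHeun_deriv_equation_general
    (α γ δ ε q : ℂ)
    (U : Set ℂ) (hU : IsOpen U) (hUsub : U ⊆ ({0, 1} : Set ℂ)ᶜ)
    (y : ℂ → ℂ) (hy : DifferentiableOn ℂ y U)
    (hode : ∀ z ∈ U, deriv (deriv y) z
      + (γ / z + δ / (z - 1) + ε) * deriv y z
      + ((α * z - q) / (z * (z - 1))) * y z = 0) :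
    ∀ z ∈ U, α * z - q ≠ 0 →
      deriv (deriv (deriv y)) z
      + ((γ + 1) / z + (δ + 1) / (z - 1) + ε - α / (α * z - q)) * deriv (deriv y) z
      + (((α + ε) * (α * z - 2 * q) * z + q ^ 2 - (γ + δ - ε) * q + α * γ)
          / (z * (z - 1) * (α * z - q))) * deriv y z = 0 := by
  intro z hz hq
  obtain ⟨hz0, hz1⟩ : z ≠ 0 ∧ z ≠ 1 := by simpa [not_or] using hUsub hz
  have hz1' : z - 1 ≠ 0 := sub_ne_zero.mpr hz1
  have hv := secondOrderLinear_deriv_equation hU hy hode hz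
    (hasDerivAt_confluentHeun_firstCoeff γ δ ε hz0 hz1')
    (hasDerivAt_confluentHeun_secondCoeff α q hz0 hz1')
    (div_ne_zero hq (mul_ne_zero hz0 hz1'))
  -- `field_simp` looks for the denominator in its normal form `z * α - q`
  have hq' : z * α - q ≠ 0 := by rwa [mul_comm] at hq
  convert hv using 3
  · field_simp
    ring
  · field_simp
    ring

/-- The derivative of a solution of the confluent Heun equation satisfies a second order
linear equation with an extra apparent singularity at z = q/α. -/
theorem confluentHeun_deriv_equation
    (α γ δ ε q : ℂ) (hα : α ≠ 0)
    (U : Set ℂ) (hU : IsOpen U) (hUsub : U ⊆ ({0, 1} : Set ℂ)ᶜ)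
    (y : ℂ → ℂ) (hy : DifferentiableOn ℂ y U)
    (hode : ∀ z ∈ U, deriv (deriv y) z
      + (γ / z + δ / (z - 1) + ε) * deriv y z
      + ((α * z - q) / (z * (z - 1))) * y z = 0) :
    ∀ z ∈ U, α * z - q ≠ 0 →
      deriv (deriv (deriv y)) z
      + ((γ + 1) / z + (δ + 1) / (z - 1) + ε - α / (α * z - q)) * deriv (deriv y) z
      + (((α + ε) * (α * z - 2 * q) * z + q ^ 2 - (γ + δ - ε) * q + α * γ)
          / (z * (z - 1) * (α * z - q))) * deriv y z = 0 :=
  confluentHeun_deriv_equation_general α γ δ ε q U hU hUsub y hy hode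
end

section
/- Let U ⊆ ℝ be open, β a nonzero real constant, and let P, Q, A, B, V, S be functions on U with P, Q, A, B differentiable on U and A nowhere vanishing on U. Suppose that on U: (i) P' = −B·P + β·A·Q; (ii) Q' = (B + V)·Q − Ã·P for some function Ã; and (iii) B² + V·B + S = β·A·Ã. Then P satisfies the second order linear equation P'' − (V + A'/A)·P' + (B' − B·(A'/A) + S)·P = 0 on U. -/
/-!
Differentiate (i) once more; then (i) expresses `β A Q` through `P'` and `P`, (ii) turns `β A Q'`
into terms in `Q` and `β A Ã P`, and (iii) replaces `β A Ã` by `B² + V B + S`, so `Q` drops out.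
-/

open Filter Topology

lemma deriv_deriv_eq_of_eventuallyEq_ladder {𝕜 : Type*} [NontriviallyNormedField 𝕜]
    {P Q A B : 𝕜 → 𝕜} {β x : 𝕜}
    (hP : DifferentiableAt 𝕜 P x) (hQ : DifferentiableAt 𝕜 Q x)
    (hA : DifferentiableAt 𝕜 A x) (hB : DifferentiableAt 𝕜 B x)
    (h1 : deriv P =ᶠ[𝓝 x] fun y => -B y * P y + β * A y * Q y) :
    deriv (deriv P) x = -deriv B x * P x - B x * deriv P x
      + β * deriv A x * Q x + β * A x * deriv Q x := by
  have hD : HasDerivAt (fun y => -B y * P y + β * A y * Q y)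
      (-deriv B x * P x + -B x * deriv P x + (β * deriv A x * Q x + β * A x * deriv Q x)) x :=
    (hB.hasDerivAt.neg.mul hP.hasDerivAt).add ((hA.hasDerivAt.const_mul β).mul hQ.hasDerivAt)
  rw [h1.deriv_eq, hD.deriv]
  ring

lemma ladder_elimination_of_deriv_deriv {K : Type*} [Field K]
    {β p p' p'' q q' a a' b b' v s ã : K} (ha : a ≠ 0)
    (h1 : p' = -b * p + β * a * q) (h2 : q' = (b + v) * q - ã * p)
    (h3 : b ^ 2 + v * b + s = β * a * ã)
    (h'' : p'' = -b' * p - b * p' + β * a' * q + β * a * q') :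
    p'' - (v + a' / a) * p' + (b' - b * (a' / a) + s) * p = 0 := by
  rw [h'', h2, h1]
  field_simp
  linear_combination (a * p) * h3

theorem ladder_elimination_second_order_ode_general
    (U : Set ℝ) (hU : IsOpen U) (β : ℝ)
    (P Q A B V S Atil : ℝ → ℝ)
    (hP : DifferentiableOn ℝ P U) (hQ : DifferentiableOn ℝ Q U)
    (hA : DifferentiableOn ℝ A U) (hB : DifferentiableOn ℝ B U)
    (hA0 : ∀ x ∈ U, A x ≠ 0)
    (h1 : ∀ x ∈ U, deriv P x = - B x * P x + β * A x * Q x)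
    (h2 : ∀ x ∈ U, deriv Q x = (B x + V x) * Q x - Atil x * P x)
    (h3 : ∀ x ∈ U, (B x) ^ 2 + V x * B x + S x = β * A x * Atil x) :
    ∀ x ∈ U, deriv (deriv P) x - (V x + deriv A x / A x) * deriv P x
      + (deriv B x - B x * (deriv A x / A x) + S x) * P x = 0 := by
  intro x hx
  have hxU : U ∈ 𝓝 x := hU.mem_nhds hx
  have h1_near : deriv P =ᶠ[𝓝 x] fun y => -B y * P y + β * A y * Q y :=
    eventually_of_mem hxU h1
  refine ladder_elimination_of_deriv_deriv (hA0 x hx) (h1 x hx) (h2 x hx) (h3 x hx) ?_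
  exact deriv_deriv_eq_of_eventuallyEq_ladder (hP.differentiableAt hxU)
    (hQ.differentiableAt hxU) (hA.differentiableAt hxU) (hB.differentiableAt hxU) h1_near

/-- Elimination of Q from the two ladder-operator relations, together with the
supplementary condition (S₂'), yields a second order linear ODE for P. -/
theorem ladder_elimination_second_order_ode
    (U : Set ℝ) (hU : IsOpen U) (β : ℝ) (hβ : β ≠ 0)
    (P Q A B V S Atil : ℝ → ℝ)
    (hP : DifferentiableOn ℝ P U) (hQ : DifferentiableOn ℝ Q U)
    (hA : DifferentiableOn ℝ A U) (hB : DifferentiableOn ℝ B U)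
    (hA0 : ∀ x ∈ U, A x ≠ 0)
    (h1 : ∀ x ∈ U, deriv P x = - B x * P x + β * A x * Q x)
    (h2 : ∀ x ∈ U, deriv Q x = (B x + V x) * Q x - Atil x * P x)
    (h3 : ∀ x ∈ U, (B x) ^ 2 + V x * B x + S x = β * A x * Atil x) :
    ∀ x ∈ U, deriv (deriv P) x - (V x + deriv A x / A x) * deriv P x
      + (deriv B x - B x * (deriv A x / A x) + S x) * P x = 0 :=
  ladder_elimination_second_order_ode_general U hU β P Q A B V S Atil hP hQ hA hB hA0 h1 h2 h3
end

section
/- Let α, β > 0 and let (P_n) be the monic orthogonal polynomials with respect to the weight w(x) = x^α(1−x)^β on [0,1], with h_n := ∫_0^1 P_n(x)² w(x) dx. Define R_n := (α/h_n) ∫_0^1 (P_n(y)²/y) y^α(1−y)^β dy. Then R_n = 2n + 1 + α + β for every n ≥ 0. -/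
open MeasureTheory Polynomial Set

/-! Write `L_{a,b}(q) = ∫₀¹ q(x) xᵃ (1 - x)ᵇ dx` (this is `jacobiIntegral a b q`) and `p = P_n`.
The function `p(x)² xᵅ (1 - x)^(β+1)` vanishes at both ends of `[0, 1]`, so its derivative
integrates to zero: `L_{α,β}((1 - X)(p²)') + α L_{α-1,β}((1 - X) p²) = (β + 1) L_{α,β}(p²)`.
Since `p'` and `X p' - n p` have degree `< n`, orthogonality gives `L_{α,β}(p (1 - X) p') = -n h_n`,
while `L_{α-1,β}((1 - X) p²) = L_{α-1,β}(p²) - h_n`. Hence `α L_{α-1,β}(p²) = (2n + 1 + α + β) h_n`,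
and `L_{α-1,β}(p²)` is the integral defining `R_n`. -/

theorem degree_X_mul_derivative_sub_C_natDegree_mul_lt {R : Type*} [CommRing R] (p : R[X]) :
    (X * derivative p - C (p.natDegree : R) * p).degree < (p.natDegree : WithBot ℕ) := by
  rw [degree_lt_iff_coeff_zero]
  intro m hm
  rcases m with _ | m
  · simp [Nat.le_zero.mp hm]
  · rw [coeff_sub, coeff_X_mul, coeff_derivative, coeff_C_mul]
    rcases hm.eq_or_lt with h | h
    · rw [h]; push_cast; ring
    · rw [coeff_eq_zero_of_natDegree_lt h]; simp

theorem degree_derivative_lt_natDegree {R : Type*} [Semiring R] (p : R[X]) :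
    (derivative p).degree < p.natDegree := by
  rcases eq_or_ne p 0 with rfl | hp
  · simp
  · exact degree_eq_natDegree hp ▸ degree_derivative_lt hp

noncomputable def jacobiIntegral (a b : ℝ) (q : ℝ[X]) : ℝ :=
  ∫ x in (0:ℝ)..1, q.eval x * (x ^ a * (1 - x) ^ b)

variable {a b : ℝ}

theorem intervalIntegrable_eval_mul_rpow_mul_rpow (ha : -1 < a) (hb : 0 ≤ b) (q : ℝ[X]) :
    IntervalIntegrable (fun x => q.eval x * (x ^ a * (1 - x) ^ b)) volume 0 1 :=
  ((intervalIntegral.intervalIntegrable_rpow' ha).mul_continuousOn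
    ((Real.continuous_rpow_const hb).comp (continuous_sub_left 1)).continuousOn).continuousOn_mul
    q.continuous.continuousOn

theorem jacobiIntegral_sub (ha : -1 < a) (hb : 0 ≤ b) (p q : ℝ[X]) :
    jacobiIntegral a b (p - q) = jacobiIntegral a b p - jacobiIntegral a b q := by
  simp only [jacobiIntegral, eval_sub, sub_mul]
  exact intervalIntegral.integral_sub (intervalIntegrable_eval_mul_rpow_mul_rpow ha hb p)
    (intervalIntegrable_eval_mul_rpow_mul_rpow ha hb q)

theorem jacobiIntegral_C_mul (c : ℝ) (q : ℝ[X]) :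
    jacobiIntegral a b (C c * q) = c * jacobiIntegral a b q := by
  simp only [jacobiIntegral, eval_mul, eval_C, mul_assoc, intervalIntegral.integral_const_mul]

theorem jacobiIntegral_sum {ι : Type*} (ha : -1 < a) (hb : 0 ≤ b) (s : Finset ι) (q : ι → ℝ[X]) :
    jacobiIntegral a b (∑ i ∈ s, q i) = ∑ i ∈ s, jacobiIntegral a b (q i) := by
  simp only [jacobiIntegral, eval_finsetSum, Finset.sum_mul]
  exact intervalIntegral.integral_finsetSum fun i _ =>
    intervalIntegrable_eval_mul_rpow_mul_rpow ha hb (q i)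

theorem jacobiIntegral_X_mul (ha : a + 1 ≠ 0) (q : ℝ[X]) :
    jacobiIntegral a b (X * q) = jacobiIntegral (a + 1) b q := by
  refine intervalIntegral.integral_congr fun x hx => ?_
  rw [uIcc_of_le zero_le_one] at hx
  simp only [eval_mul, eval_X, Real.rpow_add_one' hx.1 ha]
  ring

theorem jacobiIntegral_one_sub_X_mul (hb : b + 1 ≠ 0) (q : ℝ[X]) :
    jacobiIntegral a b ((1 - X) * q) = jacobiIntegral a (b + 1) q := by
  refine intervalIntegral.integral_congr fun x hx => ?_
  rw [uIcc_of_le zero_le_one] at hx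
  simp only [eval_mul, eval_sub, eval_one, eval_X, Real.rpow_add_one' (sub_nonneg.2 hx.2) hb]
  ring

theorem jacobiIntegral_sub_one (q : ℝ[X]) :
    jacobiIntegral (a - 1) b q = ∫ x in (0:ℝ)..1, (q.eval x / x) * (x ^ a * (1 - x) ^ b) := by
  simp only [jacobiIntegral, intervalIntegral.integral_of_le zero_le_one]
  refine setIntegral_congr_fun measurableSet_Ioc fun x hx => ?_
  rw [Real.rpow_sub_one hx.1.ne']
  ring

theorem jacobiIntegral_sq_pos (ha : -1 < a) (hb : 0 ≤ b) {p : ℝ[X]} (hp : p ≠ 0) :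
    0 < jacobiIntegral a b (p ^ 2) := by
  have hnonneg : ∀ x ∈ Icc (0:ℝ) 1, 0 ≤ (p ^ 2).eval x * (x ^ a * (1 - x) ^ b) := fun x hx => by
    have := Real.rpow_nonneg hx.1 a
    have := Real.rpow_nonneg (sub_nonneg.2 hx.2) b
    rw [eval_pow]; positivity
  have hsupp : Ioo (0:ℝ) 1 \ p.rootSet ℝ ⊆
      Function.support (fun x => (p ^ 2).eval x * (x ^ a * (1 - x) ^ b)) ∩ Ioc 0 1 := by
    rintro x ⟨⟨hx0, hx1⟩, hroot⟩
    refine ⟨?_, hx0, hx1.le⟩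
    have : p.eval x ≠ 0 := fun h => hroot ((mem_rootSet_of_ne hp).2 (by simpa using h))
    have := Real.rpow_pos_of_pos hx0 a
    have := Real.rpow_pos_of_pos (sub_pos.2 hx1) b
    simp only [Function.mem_support, eval_pow]
    positivity
  rw [jacobiIntegral, intervalIntegral.integral_pos_iff_support_of_nonneg_ae' _
    (intervalIntegrable_eval_mul_rpow_mul_rpow ha hb _)]
  · refine ⟨zero_lt_one, lt_of_lt_of_le ?_ (measure_mono hsupp)⟩
    rw [measure_sdiff_null ((p.rootSet_finite ℝ).measure_zero _)]
    simp
  · rw [uIoc_of_le zero_le_one, Filter.EventuallyLE, ae_restrict_iff' measurableSet_Ioc]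
    exact Filter.Eventually.of_forall fun x hx => hnonneg x (Ioc_subset_Icc_self hx)

theorem jacobiIntegral_derivative (ha : 0 < a) (hb : 0 ≤ b) (q : ℝ[X]) :
    jacobiIntegral a (b + 1) (derivative q) + a * jacobiIntegral (a - 1) (b + 1) q
      = (b + 1) * jacobiIntegral a b q := by
  set F : ℝ → ℝ := fun x => q.eval x * (x ^ a * (1 - x) ^ (b + 1))
  have hF : ∀ x ∈ Ioo (0:ℝ) 1, HasDerivAt F ((derivative q).eval x * (x ^ a * (1 - x) ^ (b + 1))
      + a * (q.eval x * (x ^ (a - 1) * (1 - x) ^ (b + 1)))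
      - (b + 1) * (q.eval x * (x ^ a * (1 - x) ^ b))) x := by
    intro x hx
    have hx1 : 1 - x ≠ 0 := (sub_pos.2 hx.2).ne'
    have := (q.hasDerivAt x).mul ((Real.hasDerivAt_rpow_const (p := a) (Or.inl hx.1.ne')).mul
      ((Real.hasDerivAt_rpow_const (p := b + 1) (Or.inl hx1)).comp x
        ((hasDerivAt_id x).const_sub 1)))
    refine this.congr_deriv ?_
    simp only [Pi.mul_apply, Function.comp_apply, add_sub_cancel_right]
    ring
  have hFcont : ContinuousOn F (Icc 0 1) :=
    (q.continuous.mul ((Real.continuous_rpow_const ha.le).mul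
      ((Real.continuous_rpow_const (by linarith)).comp (continuous_sub_left 1)))).continuousOn
  have i₁ := intervalIntegrable_eval_mul_rpow_mul_rpow (a := a) (b := b + 1) (by linarith)
    (by linarith) (derivative q)
  have i₂ := intervalIntegrable_eval_mul_rpow_mul_rpow (a := a - 1) (b := b + 1) (by linarith)
    (by linarith) q
  have i₃ := intervalIntegrable_eval_mul_rpow_mul_rpow (a := a) (by linarith) hb q
  have hftc := intervalIntegral.integral_eq_sub_of_hasDerivAt_of_le zero_le_one hFcont hF
    ((i₁.add (i₂.const_mul a)).sub (i₃.const_mul (b + 1)))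
  rw [intervalIntegral.integral_sub (i₁.add (i₂.const_mul a)) (i₃.const_mul (b + 1)),
    intervalIntegral.integral_add i₁ (i₂.const_mul a), intervalIntegral.integral_const_mul,
    intervalIntegral.integral_const_mul] at hftc
  simp only [F, Real.zero_rpow ha.ne', sub_self, Real.zero_rpow (by linarith : b + 1 ≠ 0),
    mul_zero, zero_mul, sub_zero] at hftc
  simp only [jacobiIntegral]
  linarith

theorem jacobiIntegral_mul_eq_zero_of_degree_lt (ha : -1 < a) (hb : 0 ≤ b) {n : ℕ} {p : ℝ[X]}
    (horth : ∀ k < n, jacobiIntegral a b (p * X ^ k) = 0) {q : ℝ[X]} (hq : q.degree < n) :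
    jacobiIntegral a b (p * q) = 0 := by
  rcases eq_or_ne q 0 with rfl | hq0
  · simp [jacobiIntegral]
  rw [as_sum_range_C_mul_X_pow' q ((natDegree_lt_iff_degree_lt hq0).2 hq), Finset.mul_sum,
    jacobiIntegral_sum ha hb]
  refine Finset.sum_eq_zero fun k hk => ?_
  rw [mul_left_comm, jacobiIntegral_C_mul, horth k (Finset.mem_range.1 hk), mul_zero]

theorem jacobiIntegral_mul_one_sub_X_mul_derivative (ha : -1 < a) (hb : 0 ≤ b) {p : ℝ[X]}
    (horth : ∀ k < p.natDegree, jacobiIntegral a b (p * X ^ k) = 0) :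
    jacobiIntegral a b (p * ((1 - X) * derivative p))
      = -p.natDegree * jacobiIntegral a b (p ^ 2) := by
  have hsplit : p * ((1 - X) * derivative p) = p * derivative p
      - p * (X * derivative p - C (p.natDegree : ℝ) * p) - C (p.natDegree : ℝ) * p ^ 2 := by
    ring
  rw [hsplit, jacobiIntegral_sub ha hb, jacobiIntegral_sub ha hb, jacobiIntegral_C_mul,
    jacobiIntegral_mul_eq_zero_of_degree_lt ha hb horth (degree_derivative_lt_natDegree p),
    jacobiIntegral_mul_eq_zero_of_degree_lt ha hb horth
      (degree_X_mul_derivative_sub_C_natDegree_mul_lt p)]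
  ring

theorem mul_jacobiIntegral_sub_one_sq (ha : 0 < a) (hb : 0 ≤ b) {p : ℝ[X]}
    (horth : ∀ k < p.natDegree, jacobiIntegral a b (p * X ^ k) = 0) :
    a * jacobiIntegral (a - 1) b (p ^ 2)
      = (2 * p.natDegree + 1 + a + b) * jacobiIntegral a b (p ^ 2) := by
  have hb1 : b + 1 ≠ 0 := by linarith
  have ibp := jacobiIntegral_derivative ha hb (p ^ 2)
  rw [← jacobiIntegral_one_sub_X_mul hb1, ← jacobiIntegral_one_sub_X_mul hb1, derivative_sq,
    show (1 - X) * (C 2 * p * derivative p) = C 2 * (p * ((1 - X) * derivative p)) by ring,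
    jacobiIntegral_C_mul, jacobiIntegral_mul_one_sub_X_mul_derivative (by linarith) hb horth,
    sub_mul, one_mul, jacobiIntegral_sub (by linarith) hb,
    jacobiIntegral_X_mul (by linarith), sub_add_cancel] at ibp
  linarith

/-- For the Jacobi weight x^α (1-x)^β on [0,1], the auxiliary quantity R_n equals
2n + 1 + α + β. -/
theorem jacobi_auxiliary_Rn_value
    (α β : ℝ) (hα : 0 < α) (hβ : 0 < β)
    (P : ℕ → Polynomial ℝ)
    (hmonic : ∀ n, (P n).Monic) (hdeg : ∀ n, (P n).natDegree = n)
    (horth : ∀ n, ∀ k < n, ∫ x in (0:ℝ)..1, (P n).eval x * x ^ k * (x ^ α * (1 - x) ^ β) = 0)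
    (h : ℕ → ℝ)
    (hh : ∀ n, h n = ∫ x in (0:ℝ)..1, ((P n).eval x) ^ 2 * (x ^ α * (1 - x) ^ β))
    (R : ℕ → ℝ)
    (hR : ∀ n, R n = (α / h n) *
      ∫ y in (0:ℝ)..1, (((P n).eval y) ^ 2 / y) * (y ^ α * (1 - y) ^ β)) :
    ∀ n, R n = 2 * n + 1 + α + β := by
  intro n
  have horth' : ∀ k < (P n).natDegree, jacobiIntegral α β (P n * X ^ k) = 0 := by
    simpa only [hdeg, jacobiIntegral, eval_mul, eval_pow, eval_X] using horth n
  have hpos := jacobiIntegral_sq_pos (a := α) (by linarith) hβ.le (hmonic n).ne_zero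
  have key := mul_jacobiIntegral_sub_one_sq hα hβ.le horth'
  have hhn : h n = jacobiIntegral α β (P n ^ 2) := by simp only [hh, jacobiIntegral, eval_pow]
  have hJ : ∫ y in (0:ℝ)..1, (((P n).eval y) ^ 2 / y) * (y ^ α * (1 - y) ^ β)
      = jacobiIntegral (α - 1) β (P n ^ 2) := by
    simp only [jacobiIntegral_sub_one, eval_pow]
  rw [hR n, hhn, hJ]
  rw [hdeg n] at key
  field_simp
  linarith
end

section
/- Let α, β > 0 and let R be a differentiable real function on an open interval I ⊆ (0,∞) such that R(t) ≠ 0 and R(t) ≠ t for all t ∈ I, and suppose R satisfies the Riccati equation t R'(t) = R(t)² − (α + β + t − 1) R(t) + α t on I. Then R is twice differentiable on I and satisfies, for all t ∈ I, the second order nonlinear equation 2 t² (R − t) R · R'' = (2R − t)(t R')² − 2 t R² R' + 2 R⁵ − 2 α² t² R + α² t³ − (2(α+β−1) + 5t) R⁴ + 4 t (α + β − 1 + t) R³ − (t³ + 2 t² (α+β−1) − t(1 + α² − β²)) R², i.e. R satisfies the nonlinear equation for the auxiliary quantity R_n associated with the weight x^α(1−x)^β e^{−tx} specialized to n = −1 (so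 that 2n + 1 + α + β = α + β − 1). -/
/-!
Differentiating the Riccati equation `t R' = R² - (α + β + t - 1) R + α t` gives
`t R'' = (2R - α - β - t) R' - R + α`. Substituting this for `R''`, the second order equation
becomes a quadratic polynomial identity in `R'`, which holds because `t R'` equals the
right-hand side of the Riccati equation.
-/

open Filter Topology

theorem hasDerivAt_deriv_of_riccati {α β t : ℝ} {R : ℝ → ℝ} (ht : t ≠ 0)
    (hR : DifferentiableAt ℝ R t)
    (hric : ∀ᶠ s in 𝓝 t, s * deriv R s = R s ^ 2 - (α + β + s - 1) * R s + α * s) :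
    HasDerivAt (deriv R)
      (((2 * R t - α - β - t) * deriv R t - R t + α) / t) t := by
  have hR' := hR.hasDerivAt
  have hrhs : HasDerivAt (fun s => R s ^ 2 - (α + β + s - 1) * R s + α * s)
      (2 * R t * deriv R t - (R t + (α + β + t - 1) * deriv R t) + α) t := by
    have hcoef : HasDerivAt (fun s => α + β + s - 1) 1 t :=
      ((hasDerivAt_id' t).const_add (α + β)).sub_const 1
    refine (((hR'.fun_pow 2).fun_sub (hcoef.fun_mul hR')).fun_add
      ((hasDerivAt_id' t).const_mul α)).congr_deriv ?_
    push_cast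
    ring
  have heq : deriv R =ᶠ[𝓝 t] fun s => (R s ^ 2 - (α + β + s - 1) * R s + α * s) / s := by
    filter_upwards [hric, eventually_ne_nhds ht] with s hs hs0
    rw [← hs, mul_div_cancel_left₀ _ hs0]
  refine ((hrhs.div (hasDerivAt_id' t) ht).congr_of_eventuallyEq heq).congr_deriv ?_
  rw [← hric.self_of_nhds]
  field_simp
  ring

theorem nonlinear_Rn_identity_of_riccati {α β t R r r₂ : ℝ}
    (h₁ : t * r = R ^ 2 - (α + β + t - 1) * R + α * t)
    (h₂ : t * r₂ = (2 * R - α - β - t) * r - R + α) :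
    2 * t ^ 2 * (R - t) * R * r₂
      = (2 * R - t) * (t * r) ^ 2 - 2 * t * R ^ 2 * r
        + 2 * R ^ 5 - 2 * α ^ 2 * t ^ 2 * R + α ^ 2 * t ^ 3
        - (2 * (α + β - 1) + 5 * t) * R ^ 4
        + 4 * t * (α + β - 1 + t) * R ^ 3
        - (t ^ 3 + 2 * t ^ 2 * (α + β - 1) - t * (1 + α ^ 2 - β ^ 2)) * R ^ 2 := by
  linear_combination 2 * t * (R - t) * R * h₂
    - ((2 * R - t) * (t * r + R ^ 2 - (α + β + t - 1) * R + α * t)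
      - 2 * R ^ 2 - 2 * R * (R - t) * (2 * R - α - β - t)) * h₁

theorem riccati_solves_nonlinear_Rn_jacobi_general
    (α β : ℝ)
    (I : Set ℝ) (hI : IsOpen I) (hIsub : I ⊆ Set.Ioi 0)
    (R : ℝ → ℝ) (hdiff : DifferentiableOn ℝ R I)
    (hric : ∀ t ∈ I, t * deriv R t = (R t) ^ 2 - (α + β + t - 1) * R t + α * t) :
    ∀ t ∈ I, DifferentiableAt ℝ (deriv R) t ∧
      2 * t ^ 2 * (R t - t) * R t * deriv (deriv R) t
        = (2 * R t - t) * (t * deriv R t) ^ 2 - 2 * t * (R t) ^ 2 * deriv R t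
          + 2 * (R t) ^ 5 - 2 * α ^ 2 * t ^ 2 * R t + α ^ 2 * t ^ 3
          - (2 * (α + β - 1) + 5 * t) * (R t) ^ 4
          + 4 * t * (α + β - 1 + t) * (R t) ^ 3
          - (t ^ 3 + 2 * t ^ 2 * (α + β - 1) - t * (1 + α ^ 2 - β ^ 2)) * (R t) ^ 2 := by
  intro t ht
  have ht₀ : t ≠ 0 := (hIsub ht).ne'
  have hI_nhds : I ∈ 𝓝 t := hI.mem_nhds ht
  have hR₂ := hasDerivAt_deriv_of_riccati ht₀ ((hdiff t ht).differentiableAt hI_nhds)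
    (eventually_of_mem hI_nhds hric)
  refine ⟨hR₂.differentiableAt, ?_⟩
  rw [hR₂.deriv]
  exact nonlinear_Rn_identity_of_riccati (hric t ht) (mul_div_cancel₀ _ ht₀)

/-- A solution of the Riccati equation t R' = R² − (α+β+t−1) R + αt solves the
second order nonlinear equation for the auxiliary quantity R_n of the weight
x^α (1-x)^β e^{-tx}, specialized to n = −1. -/
theorem riccati_solves_nonlinear_Rn_jacobi
    (α β : ℝ) (hα : 0 < α) (hβ : 0 < β)
    (I : Set ℝ) (hI : IsOpen I) (hIconn : I.OrdConnected) (hIsub : I ⊆ Set.Ioi 0)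
    (R : ℝ → ℝ) (hdiff : DifferentiableOn ℝ R I)
    (hR0 : ∀ t ∈ I, R t ≠ 0) (hRt : ∀ t ∈ I, R t ≠ t)
    (hric : ∀ t ∈ I, t * deriv R t = (R t) ^ 2 - (α + β + t - 1) * R t + α * t) :
    ∀ t ∈ I, DifferentiableAt ℝ (deriv R) t ∧
      2 * t ^ 2 * (R t - t) * R t * deriv (deriv R) t
        = (2 * R t - t) * (t * deriv R t) ^ 2 - 2 * t * (R t) ^ 2 * deriv R t
          + 2 * (R t) ^ 5 - 2 * α ^ 2 * t ^ 2 * R t + α ^ 2 * t ^ 3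
          - (2 * (α + β - 1) + 5 * t) * (R t) ^ 4
          + 4 * t * (α + β - 1 + t) * (R t) ^ 3
          - (t ^ 3 + 2 * t ^ 2 * (α + β - 1) - t * (1 + α ^ 2 - β ^ 2)) * (R t) ^ 2 :=
  riccati_solves_nonlinear_Rn_jacobi_general α β I hI hIsub R hdiff hric
end

section
/- Let α, β > 0 and define R(t) := α t M(β; α+β+1; t) / ((α+β) M(β; α+β; t)), where M is Kummer's confluent hypergeometric function. Then on any open interval of ℝ on which M(β; α+β; t) ≠ 0, R satisfies the Riccati equation t R'(t) = R(t)² − (α + β + t − 1) R(t) + α t. -/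
/-!
Write `M = M(a; b; ·)` with `a = β`, `b = α + β`. Comparing coefficients gives the contiguous
relation `b (M − M') = (b − a) M(a; b + 1; ·)`, which turns `R` into `t − t M'/M`, and Kummer's
equation `t M'' + (b − t) M' − a M = 0`. Under the substitution `R = t − t M'/M` Kummer's
equation becomes exactly the Riccati equation. Termwise differentiation is justified because the
ratio test shows that the Kummer series converges absolutely on all of `ℝ`.
-/

/-- Kummer's confluent hypergeometric function of the first kind,
M(a; b; t) = Σ_{k≥0} ((a)_k/(b)_k) t^k / k!. -/
noncomputable def kummerM (a b t : ℝ) : ℝ :=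
  ∑' k : ℕ, ((ascPochhammer ℝ k).eval a / (ascPochhammer ℝ k).eval b) * t ^ k / (Nat.factorial k)

open Filter Topology Polynomial

theorem summable_norm_mul_pow_of_ratio_tendsto_zero {c ρ : ℕ → ℝ}
    (hcρ : ∀ k, c (k + 1) = c k * ρ k) (hρ : Tendsto ρ atTop (𝓝 0)) (r : ℝ) :
    Summable fun k => ‖c k * r ^ k‖ := by
  have hsmall : ∀ᶠ k in atTop, ‖ρ k * r‖ ≤ 1 / 2 := by
    have h := (hρ.mul_const r).norm
    rw [zero_mul, norm_zero] at h
    exact h.eventually (ge_mem_nhds (by norm_num))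
  refine summable_of_ratio_norm_eventually_le (by norm_num : (1 / 2 : ℝ) < 1) ?_
  filter_upwards [hsmall] with k hk
  calc ‖‖c (k + 1) * r ^ (k + 1)‖‖ = ‖ρ k * r‖ * ‖‖c k * r ^ k‖‖ := by
        rw [hcρ, pow_succ]; simp only [norm_norm, norm_mul]; ring
    _ ≤ 1 / 2 * ‖‖c k * r ^ k‖‖ := by gcongr

section PowerSeries

variable {c : ℕ → ℝ}

theorem summable_norm_succ_mul_mul_pow (hc : ∀ r : ℝ, Summable fun k => ‖c k * r ^ k‖) (r : ℝ) :
    Summable fun k => ‖(k + 1) * c (k + 1) * r ^ k‖ := by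
  set s := |r| + 1
  have hs : 1 ≤ s := by simp [s]
  refine ((summable_nat_add_iff 1).mpr (hc (2 * s))).of_nonneg_of_le (fun _ => norm_nonneg _)
    fun k => ?_
  have hk : (k : ℝ) + 1 ≤ 2 ^ (k + 1) := by
    exact_mod_cast (Nat.lt_two_pow_self (n := k + 1)).le
  have hr : |r| ^ k ≤ s ^ (k + 1) :=
    (pow_le_pow_left₀ (abs_nonneg r) (by simp [s]) k).trans (pow_le_pow_right₀ hs k.le_succ)
  simp only [norm_mul, norm_pow, Real.norm_eq_abs, mul_pow, abs_two,
    abs_of_nonneg (by positivity : (0 : ℝ) ≤ s), abs_of_nonneg (by positivity : (0 : ℝ) ≤ k + 1)]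
  calc ((k : ℝ) + 1) * |c (k + 1)| * |r| ^ k ≤ 2 ^ (k + 1) * |c (k + 1)| * s ^ (k + 1) := by
        gcongr
    _ = |c (k + 1)| * (2 ^ (k + 1) * s ^ (k + 1)) := by ring

theorem hasDerivAt_tsum_mul_pow (hc : ∀ r : ℝ, Summable fun k => ‖c k * r ^ k‖) (t : ℝ) :
    HasDerivAt (fun x => ∑' k, c k * x ^ k) (∑' k, (k + 1) * c (k + 1) * t ^ k) t := by
  set s := |t| + 1
  have hmem : ∀ {y : ℝ}, |y| < s → y ∈ Set.Ioo (-s) s := fun h => abs_lt.mp h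
  have hbound : ∀ n (y : ℝ), y ∈ Set.Ioo (-s) s →
      ‖c n * (n * y ^ (n - 1))‖ ≤ ‖c n * (n * s ^ (n - 1))‖ := by
    intro n y hy
    simp only [norm_mul, norm_pow, Real.norm_eq_abs, abs_of_pos (by positivity : (0 : ℝ) < s)]
    gcongr
    exact abs_lt.mpr hy |>.le
  have hsum : Summable fun n => ‖c n * (n * s ^ (n - 1))‖ := by
    refine (summable_nat_add_iff 1).mp ((summable_norm_succ_mul_mul_pow hc s).congr fun k => ?_)
    push_cast; ring_nf
  have hzero : Summable fun n => c n * (0 : ℝ) ^ n :=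
    summable_of_ne_finset_zero (s := {0}) fun n hn => by
      rw [Finset.mem_singleton] at hn; simp [hn]
  have hderiv := hasDerivAt_tsum_of_isPreconnected hsum isOpen_Ioo isPreconnected_Ioo
    (fun n y _ => (hasDerivAt_pow n y).const_mul (c n)) hbound (y₀ := 0)
    (hmem (by simp [s]; positivity)) hzero (y := t) (hmem (by simp [s]))
  have hshift : Summable fun k => c (k + 1) * ((k + 1 : ℕ) * t ^ (k + 1 - 1)) :=
    (summable_norm_succ_mul_mul_pow hc t).of_norm.congr fun k => by push_cast; ring
  have hvalue : ∑' n : ℕ, c n * (n * t ^ (n - 1)) = ∑' k : ℕ, (k + 1) * c (k + 1) * t ^ k := by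
    rw [tsum_eq_zero_add' (f := fun n : ℕ => c n * (n * t ^ (n - 1))) hshift]
    simp only [CharP.cast_eq_zero, zero_mul, mul_zero, zero_add]
    exact tsum_congr fun k => by push_cast; ring
  rwa [hvalue] at hderiv

theorem deriv_tsum_mul_pow (hc : ∀ r : ℝ, Summable fun k => ‖c k * r ^ k‖) :
    deriv (fun x => ∑' k, c k * x ^ k) = fun t => ∑' k, (k + 1) * c (k + 1) * t ^ k :=
  funext fun t => (hasDerivAt_tsum_mul_pow hc t).deriv

theorem differentiable_tsum_mul_pow (hc : ∀ r : ℝ, Summable fun k => ‖c k * r ^ k‖) :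
    Differentiable ℝ fun x => ∑' k, c k * x ^ k :=
  fun t => (hasDerivAt_tsum_mul_pow hc t).differentiableAt

theorem hasSum_natCast_mul_mul_pow (hc : ∀ r : ℝ, Summable fun k => ‖c k * r ^ k‖) (t : ℝ) :
    HasSum (fun k => k * c k * t ^ k) (t * ∑' k, (k + 1) * c (k + 1) * t ^ k) := by
  rw [← hasSum_nat_add_iff' 1]
  simpa [pow_succ, mul_assoc, mul_comm, mul_left_comm] using
    (summable_norm_succ_mul_mul_pow hc t).of_norm.hasSum.mul_left t

end PowerSeries

noncomputable def kummerCoeff (a b : ℝ) (k : ℕ) : ℝ :=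
  (ascPochhammer ℝ k).eval a / (ascPochhammer ℝ k).eval b / k.factorial

theorem kummerM_eq_tsum (a b : ℝ) : kummerM a b = fun t => ∑' k, kummerCoeff a b k * t ^ k :=
  funext fun t => tsum_congr fun k => by rw [kummerCoeff]; ring

/-- No hypothesis on `b` is needed: where `(b)ₖ` or `b + k` vanishes, both sides are `0`
because `x / 0 = 0`. -/
theorem kummerCoeff_succ (a b : ℝ) (k : ℕ) :
    kummerCoeff a b (k + 1) = kummerCoeff a b k * ((a + k) / (b + k) / (k + 1)) := by
  simp only [kummerCoeff, ascPochhammer_succ_eval, Nat.factorial_succ, Nat.cast_mul, Nat.cast_succ,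
    div_eq_mul_inv, mul_inv]
  ring

theorem tendsto_kummerCoeff_ratio (a b : ℝ) :
    Tendsto (fun k : ℕ => (a + k) / (b + k) / (k + 1)) atTop (𝓝 0) := by
  have h := (tendsto_add_mul_div_add_mul_atTop_nhds a b 1 one_ne_zero).mul
    (tendsto_one_div_add_atTop_nhds_zero_nat (𝕜 := ℝ))
  simpa [div_eq_mul_inv] using h

theorem summable_norm_kummerCoeff_mul_pow (a b r : ℝ) :
    Summable fun k => ‖kummerCoeff a b k * r ^ k‖ :=
  summable_norm_mul_pow_of_ratio_tendsto_zero (kummerCoeff_succ a b)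
    (tendsto_kummerCoeff_ratio a b) r

theorem differentiable_kummerM (a b : ℝ) : Differentiable ℝ (kummerM a b) := by
  rw [kummerM_eq_tsum]
  exact differentiable_tsum_mul_pow (summable_norm_kummerCoeff_mul_pow a b)

theorem differentiable_deriv_kummerM (a b : ℝ) : Differentiable ℝ (deriv (kummerM a b)) := by
  rw [kummerM_eq_tsum, deriv_tsum_mul_pow (summable_norm_kummerCoeff_mul_pow a b)]
  exact differentiable_tsum_mul_pow
    (summable_norm_succ_mul_mul_pow (summable_norm_kummerCoeff_mul_pow a b))

section Contiguous

variable (a : ℝ) {b : ℝ}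

theorem add_natCast_ne_zero_of_forall_ne_neg (hb : ∀ n : ℕ, (n : ℝ) ≠ -b) (k : ℕ) :
    b + k ≠ 0 :=
  fun h => hb k (by linarith)

theorem succ_mul_kummerCoeff_succ (hb : ∀ n : ℕ, (n : ℝ) ≠ -b) (k : ℕ) :
    (k + 1) * kummerCoeff a b (k + 1) * (b + k) = kummerCoeff a b k * (a + k) := by
  have := add_natCast_ne_zero_of_forall_ne_neg hb k
  rw [kummerCoeff_succ]
  field_simp

theorem kummerCoeff_add_one (hb : ∀ n : ℕ, (n : ℝ) ≠ -b) (k : ℕ) :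
    (b + k) * kummerCoeff a (b + 1) k = b * kummerCoeff a b k := by
  have hpoch : b * (ascPochhammer ℝ k).eval (b + 1) = (ascPochhammer ℝ k).eval b * (b + k) := by
    rw [← ascPochhammer_succ_eval, ascPochhammer_succ_left]; simp [eval_comp]
  have hbk : (ascPochhammer ℝ k).eval b ≠ 0 := by
    rw [Ne, ascPochhammer_eval_eq_zero_iff]; rintro ⟨n, -, hn⟩; exact hb n hn
  have hb1k : (ascPochhammer ℝ k).eval (b + 1) ≠ 0 := by
    rintro h; rw [h, mul_zero, eq_comm] at hpoch
    exact mul_ne_zero hbk (add_natCast_ne_zero_of_forall_ne_neg hb k) hpoch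
  simp only [kummerCoeff]
  field_simp
  linear_combination -(ascPochhammer ℝ k).eval a * hpoch

theorem kummerM_ode (hb : ∀ n : ℕ, (n : ℝ) ≠ -b) (t : ℝ) :
    t * deriv (deriv (kummerM a b)) t + (b - t) * deriv (kummerM a b) t - a * kummerM a b t
      = 0 := by
  set c := kummerCoeff a b
  set d : ℕ → ℝ := fun k => (k + 1) * c (k + 1)
  have hc := summable_norm_kummerCoeff_mul_pow a b
  have hd : ∀ r : ℝ, Summable fun k => ‖d k * r ^ k‖ := summable_norm_succ_mul_mul_pow hc
  rw [kummerM_eq_tsum, deriv_tsum_mul_pow hc, deriv_tsum_mul_pow hd]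
  have hsum := ((hasSum_natCast_mul_mul_pow hd t).add ((hd t).of_norm.hasSum.mul_left b)).sub
    ((hasSum_natCast_mul_mul_pow hc t).add ((hc t).of_norm.hasSum.mul_left a))
  have hcoeff : ∀ k : ℕ,
      k * d k * t ^ k + b * (d k * t ^ k) - (k * c k * t ^ k + a * (c k * t ^ k)) = 0 :=
    fun k => by linear_combination t ^ k * succ_mul_kummerCoeff_succ a hb k
  beta_reduce
  linear_combination hsum.unique (by convert hasSum_zero using 1; exact funext hcoeff)

theorem kummerM_sub_deriv (hb : ∀ n : ℕ, (n : ℝ) ≠ -b) (t : ℝ) :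
    b * (kummerM a b t - deriv (kummerM a b) t) = (b - a) * kummerM a (b + 1) t := by
  have hc := summable_norm_kummerCoeff_mul_pow a b
  rw [kummerM_eq_tsum, kummerM_eq_tsum, deriv_tsum_mul_pow hc]
  have hlhs := ((hc t).of_norm.hasSum.sub (summable_norm_succ_mul_mul_pow hc t).of_norm.hasSum)
  refine (hlhs.mul_left b).unique ?_
  convert (summable_norm_kummerCoeff_mul_pow a (b + 1) t).of_norm.hasSum.mul_left (b - a) using 1
  funext k
  apply mul_left_cancel₀ (add_natCast_ne_zero_of_forall_ne_neg hb k)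
  linear_combination -(b - a) * t ^ k * kummerCoeff_add_one a hb k
    - b * t ^ k * succ_mul_kummerCoeff_succ a hb k

end Contiguous

theorem deriv_riccati_of_kummer_ode {f : ℝ → ℝ} {a b t : ℝ} (hf : DifferentiableAt ℝ f t)
    (hf' : DifferentiableAt ℝ (deriv f) t) (hft : f t ≠ 0)
    (hode : t * deriv (deriv f) t + (b - t) * deriv f t - a * f t = 0) :
    t * deriv (fun x => x - x * deriv f x / f x) t =
      (t - t * deriv f t / f t) ^ 2 - (b + t - 1) * (t - t * deriv f t / f t) + (b - a) * t := by
  have hR : HasDerivAt (fun x => x - x * deriv f x / f x) _ t := (hasDerivAt_id' t).sub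
    (((hasDerivAt_id' t).mul hf'.hasDerivAt).div hf.hasDerivAt hft)
  rw [hR.deriv, Pi.mul_apply]
  field_simp
  linear_combination (-(t * f t)) * hode

theorem kummer_ratio_riccati_jacobi_general
    (α β : ℝ) (hα : 0 < α) (hβ : 0 < β)
    (I : Set ℝ) (hI : IsOpen I)
    (hM : ∀ t ∈ I, kummerM β (α + β) t ≠ 0)
    (R : ℝ → ℝ)
    (hR : ∀ t, R t = α * t * kummerM β (α + β + 1) t / ((α + β) * kummerM β (α + β) t)) :
    ∀ t ∈ I, t * deriv R t = (R t) ^ 2 - (α + β + t - 1) * R t + α * t := by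
  set M := kummerM β (α + β)
  have hpos : ∀ n : ℕ, (n : ℝ) ≠ -(α + β) := fun n => by
    have := n.cast_nonneg (α := ℝ); intro h; linarith
  have hR_eq : ∀ x ∈ I, R x = x - x * deriv M x / M x := by
    intro x hx
    have := hM x hx
    rw [hR]
    field_simp
    linear_combination -x * kummerM_sub_deriv β hpos x
  intro t ht
  have hRt : R =ᶠ[𝓝 t] fun x => x - x * deriv M x / M x :=
    Filter.eventually_of_mem (hI.mem_nhds ht) hR_eq
  rw [hRt.deriv_eq, hR_eq t ht, deriv_riccati_of_kummer_ode (differentiable_kummerM _ _ t)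
    (differentiable_deriv_kummerM _ _ t) (hM t ht) (kummerM_ode β hpos t)]
  ring

/-- The ratio R(t) = α t M(β; α+β+1; t) / ((α+β) M(β; α+β; t)) satisfies the Riccati
equation t R' = R² − (α+β+t−1) R + α t. -/
theorem kummer_ratio_riccati_jacobi
    (α β : ℝ) (hα : 0 < α) (hβ : 0 < β)
    (I : Set ℝ) (hI : IsOpen I) (hIconn : I.OrdConnected)
    (hM : ∀ t ∈ I, kummerM β (α + β) t ≠ 0)
    (R : ℝ → ℝ)
    (hR : ∀ t, R t = α * t * kummerM β (α + β + 1) t / ((α + β) * kummerM β (α + β) t)) :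
    ∀ t ∈ I, t * deriv R t = (R t) ^ 2 - (α + β + t - 1) * R t + α * t :=
  kummer_ratio_riccati_jacobi_general α β hα hβ I hI hM R hR
end

section
/- Let α, β, s, a, b ∈ ℂ and let λ ∈ ℂ satisfy λ² − (α+β+1)λ − b = 0 (i.e. λ = (α+β+1 ± √((α+β+1)² + 4b))/2). Suppose f is holomorphic on an open set U ⊆ ℂ \ {0, 1} and satisfies f''(z) + (s/z² + (α+1)/z + (β+1)/(z−1)) f'(z) − ((bz + a)/((z−1)z²)) f(z) = 0 on U. Define g(u) := u^{−λ} f(1/u) using the principal branch of u^{−λ} on ℂ \ (−∞,0]. Then for every u ∈ ℂ \ (−∞,0] with u ≠ 1 and 1/u ∈ U, g satisfies the confluent Heun equation g''(u) + ((2λ−α−β)/u + (β+1)/(u−1) − s) g'(u) + ((−sλ·u − (λ(α−λ−s) − a))/(u(u−1))) g(u) = 0, i.e. the confluent Heun equation with parameters γ̃ = 2λ−α−β, δ̃ = β+1, ε̃ = −s, α̃ = −sλ, q̃ = λ(α−λ−s) − a. -/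
/-!
Write `z = 1/u`. Differentiating `u ^ c * h (1/u)` gives `u ^ c * (c z h(z) - z² h'(z))`, again of
the same shape, so applying this twice expresses `g'` and `g''` as `u ^ (-λ)` times combinations of
`f, f', f''` at `z`. After clearing denominators, the confluent Heun operator applied to `g` is
`-u ^ (-λ)` times the equation for `f` at `z`, plus a multiple of `λ² - (α+β+1)λ - b`.
-/

open Complex Filter Topology

theorem hasDerivAt_cpow_mul_comp_inv (c : ℂ) {h : ℂ → ℂ} {h' u : ℂ} (hu : u ∈ slitPlane)
    (hh : HasDerivAt h h' u⁻¹) :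
    HasDerivAt (fun w => w ^ c * h w⁻¹) (u ^ c * (c * u⁻¹ * h u⁻¹ - u⁻¹ ^ 2 * h')) u := by
  have hu0 : u ≠ 0 := slitPlane_ne_zero hu
  have hpow : u ^ (c - 1) = u ^ c * u⁻¹ := by rw [cpow_sub _ _ hu0, cpow_one, div_eq_mul_inv]
  refine ((hasStrictDerivAt_cpow_const hu).hasDerivAt.mul
    (hh.comp u (hasDerivAt_inv hu0))).congr_deriv ?_
  rw [hpow, inv_pow, Function.comp_apply]
  ring

theorem deriv_deriv_cpow_mul_comp_inv (c : ℂ) {f : ℂ → ℂ} {U : Set ℂ} (hU : IsOpen U)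
    (hf : DifferentiableOn ℂ f U) {u : ℂ} (hu : u ∈ slitPlane) (huU : u⁻¹ ∈ U) :
    deriv (deriv fun w => w ^ c * f w⁻¹) u = u ^ c * (u⁻¹ ^ 4 * deriv (deriv f) u⁻¹
      + 2 * (1 - c) * u⁻¹ ^ 3 * deriv f u⁻¹ + c * (c - 1) * u⁻¹ ^ 2 * f u⁻¹) := by
  have hf_deriv : ∀ z ∈ U, HasDerivAt f (deriv f z) z := fun z hz =>
    (hf.differentiableAt (hU.mem_nhds hz)).hasDerivAt
  set k : ℂ → ℂ := fun z => c * z * f z - z ^ 2 * deriv f z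
  have hderiv_eq : deriv (fun w => w ^ c * f w⁻¹) =ᶠ[𝓝 u] fun w => w ^ c * k w⁻¹ := by
    filter_upwards [isOpen_slitPlane.mem_nhds hu,
      (continuousAt_inv₀ (slitPlane_ne_zero hu)).preimage_mem_nhds (hU.mem_nhds huU)]
      with w hw hwU
    exact (hasDerivAt_cpow_mul_comp_inv c hw (hf_deriv _ hwU)).deriv
  have hk : HasDerivAt k (c * f u⁻¹ + c * u⁻¹ * deriv f u⁻¹
      - (2 * u⁻¹ * deriv f u⁻¹ + u⁻¹ ^ 2 * deriv (deriv f) u⁻¹)) u⁻¹ := by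
    have hf'_diff : DifferentiableAt ℂ (deriv f) u⁻¹ :=
      ((hf.analyticOnNhd hU).deriv _ huU).differentiableAt
    refine ((((hasDerivAt_id _).const_mul c).mul (hf_deriv _ huU)).sub
      ((hasDerivAt_pow 2 _).mul hf'_diff.hasDerivAt)).congr_deriv ?_
    simp only [id]
    ring
  rw [hderiv_eq.deriv_eq, (hasDerivAt_cpow_mul_comp_inv c hu hk).deriv]
  ring

theorem pollaczek_jacobi_to_confluent_heun_general
    (α β s a b lam : ℂ) (hlam : lam ^ 2 - (α + β + 1) * lam - b = 0)
    (U : Set ℂ) (hU : IsOpen U)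
    (f : ℂ → ℂ) (hf : DifferentiableOn ℂ f U)
    (hode : ∀ z ∈ U, deriv (deriv f) z
      + (s / z ^ 2 + (α + 1) / z + (β + 1) / (z - 1)) * deriv f z
      - ((b * z + a) / ((z - 1) * z ^ 2)) * f z = 0)
    (g : ℂ → ℂ) (hg : ∀ u : ℂ, g u = u ^ (-lam) * f (1 / u)) :
    ∀ u ∈ Complex.slitPlane, u ≠ 1 → 1 / u ∈ U →
      deriv (deriv g) u
      + ((2 * lam - α - β) / u + (β + 1) / (u - 1) - s) * deriv g u
      + ((-(s * lam) * u - (lam * (α - lam - s) - a)) / (u * (u - 1))) * g u = 0 := by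
  intro u hu hu1 huU
  rw [one_div] at huU
  have hg_eq : g = fun w => w ^ (-lam) * f w⁻¹ := funext fun w => by rw [hg, one_div]
  have hf_deriv : HasDerivAt f (deriv f u⁻¹) u⁻¹ :=
    (hf.differentiableAt (hU.mem_nhds huU)).hasDerivAt
  rw [hg_eq, deriv_deriv_cpow_mul_comp_inv (-lam) hU hf hu huU,
    (hasDerivAt_cpow_mul_comp_inv (-lam) hu hf_deriv).deriv]
  have hu0 : u ≠ 0 := slitPlane_ne_zero hu
  have hode_u := hode u⁻¹ huU
  field_simp at hode_u ⊢
  linear_combination (-u ^ (-lam)) * hode_u + (u ^ (-lam) * f (1 / u) * u ^ 2) * hlam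

/-- The change of variable u = 1/z, g(u) = u^{-λ} f(1/u) transforms the equation for the
Pollaczek–Jacobi type weight x^α (1-x)^β e^{-t/x} into a confluent Heun equation. -/
theorem pollaczek_jacobi_to_confluent_heun
    (α β s a b lam : ℂ) (hlam : lam ^ 2 - (α + β + 1) * lam - b = 0)
    (U : Set ℂ) (hU : IsOpen U) (hUsub : U ⊆ ({0, 1} : Set ℂ)ᶜ)
    (f : ℂ → ℂ) (hf : DifferentiableOn ℂ f U)
    (hode : ∀ z ∈ U, deriv (deriv f) z
      + (s / z ^ 2 + (α + 1) / z + (β + 1) / (z - 1)) * deriv f z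
      - ((b * z + a) / ((z - 1) * z ^ 2)) * f z = 0)
    (g : ℂ → ℂ) (hg : ∀ u : ℂ, g u = u ^ (-lam) * f (1 / u)) :
    ∀ u ∈ Complex.slitPlane, u ≠ 1 → 1 / u ∈ U →
      deriv (deriv g) u
      + ((2 * lam - α - β) / u + (β + 1) / (u - 1) - s) * deriv g u
      + ((-(s * lam) * u - (lam * (α - lam - s) - a)) / (u * (u - 1))) * g u = 0 :=
  pollaczek_jacobi_to_confluent_heun_general α β s a b lam hlam U hU f hf hode g hg
end

section
/- Let α, t ∈ ℂ and n ∈ ℕ. Suppose f is holomorphic on an open set U ⊆ ℂ \ {−1, 1} and satisfies f''(z) + ((α+1)/(z−1) + (α+1)/(z+1) − 2tz) f'(z) − (n(n + 2α + 1 − (2z² − 1)t)/(z² − 1)) f(z) = 0 on U. Define g(u) := f(√u) using the principal branch of the square root on ℂ \ (−∞,0]. Then for every u ∈ ℂ \ (−∞,0] with u ≠ 1 and √u ∈ U, g satisfies the confluent Heun equation g''(u) + (1/(2u) + (α+1)/(u−1) − t) g'(u) + ((2ntu − n(n + 2α + 1 + t))/(4u(u−1))) g(u) = 0, i.e. the confluent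 Heun equation with parameters γ̃ = 1/2, δ̃ = α+1, ε̃ = −t, α̃ = nt/2, q̃ = n(n+2α+t+1)/4. -/
/-!
Put `z = √u`. By the chain rule `g'(u) = f'(z) / (2z)` and `g''(u) = (f''(z) - f'(z) / z) / (4u)`,
and with these substitutions the confluent Heun expression for `g` at `u` is exactly the
`z`-equation for `f` divided by `4z²`.
-/

open Complex Filter Topology

namespace Complex

theorem cpow_half_sq (u : ℂ) : (u ^ (1 / 2 : ℂ)) ^ 2 = u := by
  simp

theorem cpow_half_ne_zero {u : ℂ} (hu : u ≠ 0) : u ^ (1 / 2 : ℂ) ≠ 0 :=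
  (cpow_ne_zero_iff_of_exponent_ne_zero (by norm_num)).2 hu

theorem hasDerivAt_cpow_half {u : ℂ} (hu : u ∈ slitPlane) :
    HasDerivAt (· ^ (1 / 2 : ℂ)) (1 / (2 * u ^ (1 / 2 : ℂ))) u := by
  have hu0 : u ≠ 0 := slitPlane_ne_zero hu
  have hz0 := cpow_half_ne_zero hu0
  refine (hasStrictDerivAt_cpow_const hu).hasDerivAt.congr_deriv ?_
  rw [cpow_sub _ _ hu0, cpow_one]
  nth_rewrite 2 [← cpow_half_sq u]
  field_simp

theorem hasDerivAt_comp_cpow_half {f : ℂ → ℂ} {u : ℂ} (hu : u ∈ slitPlane)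
    (hf : DifferentiableAt ℂ f (u ^ (1 / 2 : ℂ))) :
    HasDerivAt (fun v ↦ f (v ^ (1 / 2 : ℂ)))
      (deriv f (u ^ (1 / 2 : ℂ)) / (2 * u ^ (1 / 2 : ℂ))) u :=
  (hf.hasDerivAt.comp u (hasDerivAt_cpow_half hu)).congr_deriv (mul_one_div _ _)

theorem deriv_comp_cpow_half_eventuallyEq {f : ℂ → ℂ} {U : Set ℂ} (hU : IsOpen U)
    (hf : DifferentiableOn ℂ f U) {u : ℂ} (hu : u ∈ slitPlane) (huU : u ^ (1 / 2 : ℂ) ∈ U) :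
    deriv (fun v ↦ f (v ^ (1 / 2 : ℂ)))
      =ᶠ[𝓝 u] fun v ↦ deriv f (v ^ (1 / 2 : ℂ)) / (2 * v ^ (1 / 2 : ℂ)) := by
  have hV : slitPlane ∩ (· ^ (1 / 2 : ℂ)) ⁻¹' U ∈ 𝓝 u :=
    inter_mem (isOpen_slitPlane.mem_nhds hu)
      ((continuousAt_cpow_const hu).preimage_mem_nhds (hU.mem_nhds huU))
  filter_upwards [hV] with v ⟨hv, hvU⟩
  exact (hasDerivAt_comp_cpow_half hv (hf.differentiableAt (hU.mem_nhds hvU))).deriv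

theorem deriv_deriv_comp_cpow_half {f : ℂ → ℂ} {U : Set ℂ} (hU : IsOpen U)
    (hf : DifferentiableOn ℂ f U) {u : ℂ} (hu : u ∈ slitPlane) (huU : u ^ (1 / 2 : ℂ) ∈ U) :
    deriv (deriv fun v ↦ f (v ^ (1 / 2 : ℂ))) u =
      (deriv (deriv f) (u ^ (1 / 2 : ℂ)) - deriv f (u ^ (1 / 2 : ℂ)) / u ^ (1 / 2 : ℂ))
        / (4 * u) := by
  have hf' : DifferentiableAt ℂ (deriv f) (u ^ (1 / 2 : ℂ)) :=
    ((hf.analyticOnNhd hU).deriv _ huU).differentiableAt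
  have hz0 := cpow_half_ne_zero (slitPlane_ne_zero hu)
  rw [(deriv_comp_cpow_half_eventuallyEq hU hf hu huU).deriv_eq,
    ((hasDerivAt_comp_cpow_half hu hf').fun_div
      ((hasDerivAt_cpow_half hu).const_mul 2) (mul_ne_zero two_ne_zero hz0)).deriv]
  set z := u ^ (1 / 2 : ℂ)
  rw [← show z ^ 2 = u from cpow_half_sq u]
  field_simp
  ring

end Complex

theorem confluentHeun_eq_gaussianJacobi_div (α t ν A B C z : ℂ) (hz0 : z ≠ 0) (hz1 : z ^ 2 ≠ 1) :
    (A - B / z) / (4 * z ^ 2) + (1 / (2 * z ^ 2) + (α + 1) / (z ^ 2 - 1) - t) * (B / (2 * z))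
      + ((2 * ν * t * z ^ 2 - ν * (ν + 2 * α + 1 + t)) / (4 * z ^ 2 * (z ^ 2 - 1))) * C =
    (A + ((α + 1) / (z - 1) + (α + 1) / (z + 1) - 2 * t * z) * B
      - (ν * (ν + 2 * α + 1 - (2 * z ^ 2 - 1) * t) / (z ^ 2 - 1)) * C) / (4 * z ^ 2) := by
  have hzm : z - 1 ≠ 0 := fun h ↦ hz1 (by linear_combination (z + 1) * h)
  have hzp : z + 1 ≠ 0 := fun h ↦ hz1 (by linear_combination (z - 1) * h)
  have hz21 : z ^ 2 - 1 ≠ 0 := sub_ne_zero.2 hz1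
  field_simp
  ring

theorem gaussian_jacobi_to_confluent_heun_general
    (α t : ℂ) (n : ℕ)
    (U : Set ℂ) (hU : IsOpen U)
    (f : ℂ → ℂ) (hf : DifferentiableOn ℂ f U)
    (hode : ∀ z ∈ U, deriv (deriv f) z
      + ((α + 1) / (z - 1) + (α + 1) / (z + 1) - 2 * t * z) * deriv f z
      - ((n : ℂ) * ((n : ℂ) + 2 * α + 1 - (2 * z ^ 2 - 1) * t) / (z ^ 2 - 1)) * f z = 0)
    (g : ℂ → ℂ) (hg : ∀ u : ℂ, g u = f (u ^ (1 / 2 : ℂ))) :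
    ∀ u ∈ Complex.slitPlane, u ≠ 1 → u ^ (1 / 2 : ℂ) ∈ U →
      deriv (deriv g) u
      + (1 / (2 * u) + (α + 1) / (u - 1) - t) * deriv g u
      + ((2 * (n : ℂ) * t * u - (n : ℂ) * ((n : ℂ) + 2 * α + 1 + t)) / (4 * u * (u - 1)))
          * g u = 0 := by
  intro u hu hu1 hzU
  have hg' : g = fun v ↦ f (v ^ (1 / 2 : ℂ)) := funext hg
  have hz0 := cpow_half_ne_zero (slitPlane_ne_zero hu)
  rw [hg u, hg', deriv_deriv_comp_cpow_half hU hf hu hzU,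
    (hasDerivAt_comp_cpow_half hu (hf.differentiableAt (hU.mem_nhds hzU))).deriv]
  set z := u ^ (1 / 2 : ℂ)
  have hz2 : z ^ 2 = u := cpow_half_sq u
  rw [← hz2] at hu1 ⊢
  rw [confluentHeun_eq_gaussianJacobi_div α t n _ _ _ z hz0 hu1, hode z hzU, zero_div]

/-- The change of variable u = z², g(u) = f(√u) transforms the equation for the weight
(1-x²)^α e^{-tx²} into a confluent Heun equation. -/
theorem gaussian_jacobi_to_confluent_heun
    (α t : ℂ) (n : ℕ)
    (U : Set ℂ) (hU : IsOpen U) (hUsub : U ⊆ ({-1, 1} : Set ℂ)ᶜ)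
    (f : ℂ → ℂ) (hf : DifferentiableOn ℂ f U)
    (hode : ∀ z ∈ U, deriv (deriv f) z
      + ((α + 1) / (z - 1) + (α + 1) / (z + 1) - 2 * t * z) * deriv f z
      - ((n : ℂ) * ((n : ℂ) + 2 * α + 1 - (2 * z ^ 2 - 1) * t) / (z ^ 2 - 1)) * f z = 0)
    (g : ℂ → ℂ) (hg : ∀ u : ℂ, g u = f (u ^ (1 / 2 : ℂ))) :
    ∀ u ∈ Complex.slitPlane, u ≠ 1 → u ^ (1 / 2 : ℂ) ∈ U →
      deriv (deriv g) u
      + (1 / (2 * u) + (α + 1) / (u - 1) - t) * deriv g u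
      + ((2 * (n : ℂ) * t * u - (n : ℂ) * ((n : ℂ) + 2 * α + 1 + t)) / (4 * u * (u - 1)))
          * g u = 0 :=
  gaussian_jacobi_to_confluent_heun_general α t n U hU f hf hode g hg
end
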